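/- Let Δ : H → H ⊗ H be the unique K-linear map on the free K-vector space H on forests of planar rooted trees such that Δ(|) = 0 and, in Sweedler notation, Δ(x ≻ y) = x₍₁₎ ⊗ (x₍₂₎ ≻ y) + (x ≻ y₍₁₎) ⊗ y₍₂₎ + x ⊗ y and Δ(x * y) = x₍₁₎ ⊗ (x₍₂₎ * y) + (x * y₍₁₎) ⊗ y₍₂₎ + x ⊗ y for all x, y ∈ H. Then Δ is coassociative: (Δ ⊗ id) ∘ Δ = (id ⊗ Δ) ∘ Δ. -/

import Mathlib

/-
The elements at which `Δ` is coassociative form a submodule. If `Δ` satisfies the nonunital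
infinitesimal relation for a bilinear product `m`, this submodule is closed under `m`: expanding
both sides of coassociativity at `m x y` in Sweedler notation, the terms match pairwise by
coassociativity at `x` and at `y`, except for `x₁ ⊗ x₂y₁ ⊗ y₂`, which occurs once on each side.
The submodule contains the leaf, since `Δ(|) = 0`, so it suffices that the leaf generates `H`
under `*` and `≻`. By induction on the number of leaves: a forest `t s₁ … s_q` with `q ≥ 1` is
`t * (s₁ … s_q)`, and a tree `[t₁, t₂, …, t_r]` is `t₁ ≻ (t₂ … t_r)` minus forests of at least
two trees with the same number of leaves.
-/

open scoped TensorProduct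

/-- Planar rooted trees: a tree is either the leaf `|`, or a grafting of at
least two planar rooted trees (`graft t₁ t₂ rest` represents `[t₁, t₂, rest…]`). -/
inductive PTree : Type
  | leaf : PTree
  | graft (t₁ t₂ : PTree) (rest : List PTree) : PTree

/-- A forest is a nonempty word of planar rooted trees. -/
abbrev Forest : Type := {l : List PTree // l ≠ []}

/-- Grafting of a list of trees (only meaningful on lists of length ≥ 2;
on shorter lists we return a junk value, which is never used). -/
def graftList : List PTree → PTree
  | [] => .leaf
  | [a] => a
  | a :: b :: rest => .graft a b rest

mutual
/-- Number of leaves of a planar rooted tree. -/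
def leavesT : PTree → ℕ
  | .leaf => 1
  | .graft a b rest => leavesT a + leavesT b + leavesL rest

/-- Sum of the numbers of leaves of a list of trees. -/
def leavesL : List PTree → ℕ
  | [] => 0
  | t :: ts => leavesT t + leavesL ts
end

/-- Number of leaves of a forest. -/
def leavesF (w : Forest) : ℕ := leavesL w.1

variable (K : Type*) [Field K]

/-- `H K` is the free `K`-vector space with basis the set of forests of
planar rooted trees. -/
abbrev H : Type _ := Forest →₀ K

/-- The leaf, as a (one-tree) forest. -/
def leafF : Forest := ⟨[PTree.leaf], by simp⟩

/-- The concatenation product `*`, as a bilinear map on `H K`;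
on basis forests it is concatenation of words. -/
noncomputable def mulH : H K →ₗ[K] H K →ₗ[K] H K :=
  Finsupp.lift (H K →ₗ[K] H K) K Forest fun x =>
    Finsupp.lift (H K) K Forest fun y =>
      Finsupp.single ⟨x.1 ++ y.1, by simp [x.2]⟩ 1

/-- The grafting operation `≻` on two basis forests:
`(t₁…tₚ) ≻ (s₁…s_q) = Σ_{k=1}^{q} Σ_{i=0}^{p−1}
t₁…t_{p−(i+1)} [t_{p−i},…,tₚ, s₁,…,s_k] s_{k+1}…s_q`. -/
noncomputable def succForest (x y : Forest) : H K :=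
  ∑ k ∈ Finset.range y.1.length, ∑ i ∈ Finset.range x.1.length,
    Finsupp.single
      ⟨x.1.take (x.1.length - (i + 1)) ++
        (graftList (x.1.drop (x.1.length - (i + 1)) ++ y.1.take (k + 1)) :: y.1.drop (k + 1)),
        by simp⟩ 1

/-- The operation `≻`, as a bilinear map on `H K`. -/
noncomputable def succH : H K →ₗ[K] H K →ₗ[K] H K :=
  Finsupp.lift (H K →ₗ[K] H K) K Forest fun x =>
    Finsupp.lift (H K) K Forest fun y => succForest K x y

/-- A shortcut instance (definitionally the standard one) to help elaboration. -/
noncomputable instance : Zero (H K ⊗[K] H K) :=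
  (inferInstance : AddCommMonoid (H K ⊗[K] H K)).toZero

open LinearMap TensorProduct

namespace TensorProduct

variable {R M N P Q S : Type*} [CommSemiring R] [AddCommMonoid M] [AddCommMonoid N]
  [AddCommMonoid P] [AddCommMonoid Q] [AddCommMonoid S] [Module R M] [Module R N]
  [Module R P] [Module R Q] [Module R S]

theorem assoc_lTensor_tensor (f : P →ₗ[R] Q) (w : (M ⊗[R] N) ⊗[R] P) :
    TensorProduct.assoc R M N Q (lTensor (M ⊗[R] N) f w)
      = lTensor M (lTensor N f) (TensorProduct.assoc R M N P w) := by
  rw [lTensor_tensor]; simp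

theorem assoc_rTensor_rTensor (f : M →ₗ[R] N) (w : (M ⊗[R] P) ⊗[R] Q) :
    TensorProduct.assoc R N P Q (rTensor Q (rTensor P f) w)
      = rTensor (P ⊗[R] Q) f (TensorProduct.assoc R M P Q w) := by
  rw [rTensor_tensor]; simp

theorem assoc_rTensor_mk (x : M) (v : N ⊗[R] P) :
    TensorProduct.assoc R M N P (rTensor P (mk R M N x) v) = x ⊗ₜ v := by
  induction v using TensorProduct.induction_on with
  | zero => simp
  | tmul c d => simp
  | add s t hs ht => simp only [map_add, hs, ht, tmul_add]

theorem assoc_tmul_eq_lTensor (u : M ⊗[R] N) (y : P) :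
    TensorProduct.assoc R M N P (u ⊗ₜ y) = lTensor M ((mk R N P).flip y) u := by
  induction u using TensorProduct.induction_on with
  | zero => simp
  | tmul a b => simp
  | add s t hs ht => simp only [add_tmul, map_add, hs, ht]

theorem assoc_rTensor_flip_lTensorHom (m : N →ₗ[R] P →ₗ[R] S) (u : M ⊗[R] N) (v : P ⊗[R] Q) :
    TensorProduct.assoc R M S Q (rTensor Q ((lTensorHom M ∘ₗ m.flip).flip u) v)
      = lTensor M ((rTensorHom Q ∘ₗ m).flip v) u := by
  induction v using TensorProduct.induction_on with
  | zero => simp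
  | tmul c d =>
    induction u using TensorProduct.induction_on with
    | zero => simp
    | tmul a b => simp
    | add s t hs ht => simp only [map_add, LinearMap.add_apply, rTensor_add, hs, ht]
  | add s t hs ht => simp only [map_add, lTensor_add, LinearMap.add_apply, hs, ht]

end TensorProduct

section Coassociativity

variable {R V : Type*} [CommSemiring R] [AddCommMonoid V] [Module R V]

def coassocLocus (Δ : V →ₗ[R] V ⊗[R] V) : Submodule R V :=
  eqLocus ((TensorProduct.assoc R V V V).toLinearMap ∘ₗ rTensor V Δ ∘ₗ Δ) (lTensor V Δ ∘ₗ Δ)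

theorem mem_coassocLocus {Δ : V →ₗ[R] V ⊗[R] V} {z : V} :
    z ∈ coassocLocus Δ ↔ TensorProduct.assoc R V V V (rTensor V Δ (Δ z)) = lTensor V Δ (Δ z) :=
  Iff.rfl

def IsNonunitalInfinitesimal (Δ : V →ₗ[R] V ⊗[R] V) (m : V →ₗ[R] V →ₗ[R] V) : Prop :=
  ∀ x y, Δ (m x y) = lTensor V (m.flip y) (Δ x) + rTensor V (m x) (Δ y) + x ⊗ₜ y

theorem IsNonunitalInfinitesimal.apply_mem_coassocLocus {Δ : V →ₗ[R] V ⊗[R] V}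
    {m : V →ₗ[R] V →ₗ[R] V} (hm : IsNonunitalInfinitesimal Δ m) {x y : V}
    (hx : x ∈ coassocLocus Δ) (hy : y ∈ coassocLocus Δ) : m x y ∈ coassocLocus Δ := by
  rw [mem_coassocLocus] at *
  set α := TensorProduct.assoc R V V V
  -- the term `x₁ ⊗ m x₂ y₁ ⊗ y₂` (Sweedler notation), which occurs on both sides
  set cross := lTensor V ((rTensorHom V ∘ₗ m).flip (Δ y)) (Δ x)
  have hleft : Δ ∘ₗ m x = (lTensorHom V ∘ₗ m.flip).flip (Δ x) + rTensor V (m x) ∘ₗ Δ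
      + mk R V V x := LinearMap.ext (hm x)
  have hright : Δ ∘ₗ m.flip y = lTensor V (m.flip y) ∘ₗ Δ + (rTensorHom V ∘ₗ m).flip (Δ y)
      + (mk R V V).flip y := LinearMap.ext fun z => hm z y
  have hΔx_left : α (rTensor V Δ (lTensor V (m.flip y) (Δ x)))
      = lTensor V (lTensor V (m.flip y)) (lTensor V Δ (Δ x)) := by
    rw [← comp_apply (rTensor V Δ), rTensor_comp_lTensor, ← lTensor_comp_rTensor, comp_apply,
      assoc_lTensor_tensor, hx]
  have hΔy_left : α (rTensor V Δ (rTensor V (m x) (Δ y)))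
      = cross + rTensor (V ⊗[R] V) (m x) (lTensor V Δ (Δ y)) + x ⊗ₜ Δ y := by
    rw [← comp_apply (rTensor V Δ), ← rTensor_comp, hleft, rTensor_add, rTensor_add,
      LinearMap.add_apply, LinearMap.add_apply, map_add, map_add, assoc_rTensor_flip_lTensorHom,
      rTensor_comp, comp_apply, assoc_rTensor_rTensor, hy, assoc_rTensor_mk]
  have hΔx_right : lTensor V Δ (lTensor V (m.flip y) (Δ x))
      = lTensor V (lTensor V (m.flip y)) (lTensor V Δ (Δ x)) + cross
        + lTensor V ((mk R V V).flip y) (Δ x) := by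
    rw [← comp_apply (lTensor V Δ), ← lTensor_comp, hright, lTensor_add, lTensor_add,
      LinearMap.add_apply, LinearMap.add_apply, lTensor_comp, comp_apply]
  have hΔy_right : lTensor V Δ (rTensor V (m x) (Δ y))
      = rTensor (V ⊗[R] V) (m x) (lTensor V Δ (Δ y)) := by
    rw [← comp_apply (lTensor V Δ), lTensor_comp_rTensor, ← rTensor_comp_lTensor, comp_apply]
  rw [hm x y]
  simp only [map_add, rTensor_tmul, lTensor_tmul, hΔx_left, hΔy_left, hΔx_right, hΔy_right,
    α, assoc_tmul_eq_lTensor]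
  abel

end Coassociativity

section Forests

theorem leavesT_pos : ∀ t : PTree, 0 < leavesT t
  | .leaf => by simp [leavesT]
  | .graft a b rest => by
    have := leavesT_pos a
    simp only [leavesT]
    omega

theorem leavesL_pos : ∀ {l : List PTree}, l ≠ [] → 0 < leavesL l
  | t :: ts, _ => by
    have := leavesT_pos t
    simp only [leavesL]
    omega

theorem leavesL_append : ∀ l₁ l₂ : List PTree, leavesL (l₁ ++ l₂) = leavesL l₁ + leavesL l₂
  | [], l₂ => by simp [leavesL]
  | t :: ts, l₂ => by
    simp only [List.cons_append, leavesL, leavesL_append ts l₂]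
    omega

theorem leavesL_graft_take_cons_drop (t₁ t₂ : PTree) (l : List PTree) (k : ℕ) :
    leavesL (.graft t₁ t₂ (l.take k) :: l.drop k) = leavesL [.graft t₁ t₂ l] := by
  have := leavesL_append (l.take k) (l.drop k)
  rw [List.take_append_drop] at this
  simp only [leavesL, leavesT]
  omega

variable {K : Type*} [Field K]

theorem mulH_single_single (a b : Forest) :
    mulH K (Finsupp.single a 1) (Finsupp.single b 1)
      = Finsupp.single ⟨a.1 ++ b.1, by simp [a.2]⟩ 1 := by
  simp [mulH]

theorem succH_single_single (a b : Forest) :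
    succH K (Finsupp.single a 1) (Finsupp.single b 1) = succForest K a b := by
  simp [succH]

theorem succForest_singleton_cons (t₁ t₂ : PTree) (rest : List PTree) :
    succForest K ⟨[t₁], by simp⟩ ⟨t₂ :: rest, by simp⟩
      = ∑ k ∈ Finset.range (rest.length + 1),
          Finsupp.single ⟨.graft t₁ t₂ (rest.take k) :: rest.drop k, by simp⟩ 1 := by
  simp [succForest, graftList]

theorem Forest.single_mem_of_closed (S : Submodule K (H K))
    (hleaf : Finsupp.single leafF 1 ∈ S)
    (hmul : ∀ x ∈ S, ∀ y ∈ S, mulH K x y ∈ S) (hsucc : ∀ x ∈ S, ∀ y ∈ S, succH K x y ∈ S)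
    (w : Forest) : Finsupp.single w 1 ∈ S := by
  induction w using (measure leavesF).wf.induction with
  | h w ih =>
  replace ih : ∀ v : Forest, leavesF v < leavesF w → Finsupp.single v 1 ∈ S := ih
  have hcons (a : PTree) (bs : List PTree) (hbs : bs ≠ [])
      (hle : leavesL (a :: bs) ≤ leavesF w) :
      Finsupp.single (⟨a :: bs, by simp⟩ : Forest) 1 ∈ S := by
    have := leavesT_pos a
    have := leavesL_pos hbs
    simp only [leavesL] at hle
    have hle' : leavesL bs < leavesF w := by omega
    have hprod := hmul _ (ih ⟨[a], by simp⟩ (show leavesT a + 0 < _ by omega))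
      _ (ih ⟨bs, hbs⟩ hle')
    rwa [mulH_single_single] at hprod
  obtain ⟨l, hl⟩ := w
  match l, hl with
  | [.leaf], _ => exact hleaf
  | a :: b :: bs, _ => exact hcons a (b :: bs) (by simp) le_rfl
  | [.graft t₁ t₂ rest], hl =>
    have hsplit : Finsupp.single (⟨[.graft t₁ t₂ rest], hl⟩ : Forest) (1 : K)
        = succH K (Finsupp.single ⟨[t₁], by simp⟩ 1) (Finsupp.single ⟨t₂ :: rest, by simp⟩ 1)
          - ∑ k ∈ Finset.range rest.length,
              Finsupp.single ⟨.graft t₁ t₂ (rest.take k) :: rest.drop k, by simp⟩ 1 := by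
      rw [succH_single_single, succForest_singleton_cons, Finset.sum_range_succ]
      simp
    have := leavesT_pos t₁
    have := leavesT_pos t₂
    rw [hsplit]
    refine S.sub_mem (hsucc _ (ih _ ?_) _ (ih _ ?_)) (S.sum_mem fun k hk => ?_)
    · simp only [leavesF, leavesL, leavesT]; omega
    · simp only [leavesF, leavesL, leavesT]; omega
    exact hcons _ _ (by simpa using Finset.mem_range.1 hk)
      (leavesL_graft_take_cons_drop t₁ t₂ rest k).le

theorem Forest.submodule_eq_top_of_closed (S : Submodule K (H K))
    (hleaf : Finsupp.single leafF 1 ∈ S)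
    (hmul : ∀ x ∈ S, ∀ y ∈ S, mulH K x y ∈ S) (hsucc : ∀ x ∈ S, ∀ y ∈ S, succH K x y ∈ S) :
    S = ⊤ := by
  rw [eq_top_iff, ← Finsupp.basisSingleOne.span_eq, Submodule.span_le]
  rintro _ ⟨w, rfl⟩
  simpa using single_mem_of_closed S hleaf hmul hsucc w

end Forests

/-- The coproduct `Δ` on `H` determined by `Δ(|) = 0` and the
nonunital infinitesimal relations is coassociative: `(Δ ⊗ id) ∘ Δ = (id ⊗ Δ) ∘ Δ`
(under the canonical associativity isomorphism of tensor products). -/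
theorem stmt5 (K : Type*) [Field K] (Δ : H K →ₗ[K] H K ⊗[K] H K)
    (h0 : Δ (Finsupp.single leafF 1) = 0)
    (hsucc : ∀ x y : H K, Δ (succH K x y)
        = LinearMap.lTensor (H K) ((succH K).flip y) (Δ x)
          + LinearMap.rTensor (H K) (succH K x) (Δ y) + x ⊗ₜ[K] y)
    (hmul : ∀ x y : H K, Δ (mulH K x y)
        = LinearMap.lTensor (H K) ((mulH K).flip y) (Δ x)
          + LinearMap.rTensor (H K) (mulH K x) (Δ y) + x ⊗ₜ[K] y) :
    ∀ x : H K,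
      (TensorProduct.assoc K (H K) (H K) (H K)) (LinearMap.rTensor (H K) Δ (Δ x))
        = LinearMap.lTensor (H K) Δ (Δ x) := by
  have hcoassoc : coassocLocus Δ = ⊤ :=
    Forest.submodule_eq_top_of_closed _ (by simp [mem_coassocLocus, h0])
      (fun _ hx _ hy => IsNonunitalInfinitesimal.apply_mem_coassocLocus hmul hx hy)
      (fun _ hx _ hy => IsNonunitalInfinitesimal.apply_mem_coassocLocus hsucc hx hy)
  exact fun x => mem_coassocLocus.1 (hcoassoc ▸ Submodule.mem_top)
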